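/- arXiv:nlin/0108051 — 6 statements merged into one kernel-verified Lean document; each statement's English description precedes it below -/
import Mathlib

section
/- The polynomial Φ = py⁴ − (1/4)y³·px·py + (3/4)x·y²·py² − (3/64)x²·y⁴ − (1/128)y⁶ is a first integral of the Hamiltonian system with potential V(x,y) = x³ + (3/16)x·y²; that is, px·∂Φ/∂x + py·∂Φ/∂y − (∂V/∂x)·∂Φ/∂px − (∂V/∂y)·∂Φ/∂py = 0 identically on ℝ⁴. -/
/-- Poisson bracket {Φ, H} for H = (px² + py²)/2 + V(x,y). -/
noncomputable def poisson (V : ℝ → ℝ → ℝ) (Φ : ℝ → ℝ → ℝ → ℝ → ℝ)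
    (x y px py : ℝ) : ℝ :=
  px * deriv (fun t => Φ t y px py) x
    + py * deriv (fun t => Φ x t px py) y
    - deriv (fun t => V t y) x * deriv (fun t => Φ x y t py) px
    - deriv (fun t => V x t) y * deriv (fun t => Φ x y px t) py

theorem stmt1 :
    ∀ x y px py : ℝ,
      poisson (fun x y => x ^ 3 + (3 / 16) * x * y ^ 2)
        (fun x y px py =>
          py ^ 4 - (1 / 4) * y ^ 3 * px * py + (3 / 4) * x * y ^ 2 * py ^ 2
            - (3 / 64) * x ^ 2 * y ^ 4 - (1 / 128) * y ^ 6) x y px py = 0 := by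
  intro x y px py
  simp (disch := fun_prop) only [poisson, deriv_fun_sub, deriv_fun_add, deriv_fun_mul,
    deriv_fun_pow, deriv_const', deriv_id'', deriv_const_mul_id']
  ring
end

section
/- For every natural number k ≥ 1, the polynomial Φ = py·(y·px − x·py) + (1/2)y²·V_{k-1}(x,y), where V_{k-1}(x,y) = Σ_{m=0}^{⌊(k-1)/2⌋} 2^{−2m}·C(k−1−m, m)·x^{k−1−2m}·y^{2m}, is a first integral of the Hamiltonian system with potential V_k(x,y) = Σ_{m=0}^{⌊k/2⌋} 2^{−2m}·C(k−m, m)·x^{k−2m}·y^{2m}; that is, px·∂Φ/∂x + py·∂Φ/∂y − (∂V_k/∂x)·∂Φ/∂px − (∂V_k/∂y)·∂Φ/∂py = 0 identically. -/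
/-- The parabolic-separable homogeneous polynomial potential of degree `j`. -/
noncomputable def Vpar (j : ℕ) (x y : ℝ) : ℝ :=
  ∑ m ∈ Finset.range (j / 2 + 1),
    ((2 : ℝ) ^ (2 * m))⁻¹ * (Nat.choose (j - m) m : ℝ) * x ^ (j - 2 * m) * y ^ (2 * m)

open Finset

theorem poisson_parabolic_ansatz (V W : ℝ → ℝ → ℝ) (x y px py : ℝ)
    (hWx : DifferentiableAt ℝ (fun t => W t y) x) (hWy : DifferentiableAt ℝ (fun t => W x t) y) :
    poisson V (fun x y px py => py * (y * px - x * py) + (1 / 2) * y ^ 2 * W x y) x y px py =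
      px * (y ^ 2 / 2 * deriv (fun t => W t y) x - y * deriv (fun t => V x t) y)
      + py * (y * W x y + y ^ 2 / 2 * deriv (fun t => W x t) y
        - y * deriv (fun t => V t y) x + 2 * x * deriv (fun t => V x t) y) := by
  have dx : HasDerivAt (fun t => py * (y * px - t * py) + (1 / 2) * y ^ 2 * W t y)
      (-py ^ 2 + y ^ 2 / 2 * deriv (fun t => W t y) x) x :=
    ((((hasDerivAt_id' x).mul_const py).const_sub (y * px)).const_mul py
      |>.fun_add (hWx.hasDerivAt.const_mul ((1 / 2) * y ^ 2))).congr_deriv (by ring)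
  have dy : HasDerivAt (fun t => py * (t * px - x * py) + (1 / 2) * t ^ 2 * W x t)
      (py * px + y * W x y + y ^ 2 / 2 * deriv (fun t => W x t) y) y :=
    ((((hasDerivAt_id' y).mul_const px).sub_const (x * py)).const_mul py
      |>.fun_add (((hasDerivAt_pow 2 y).const_mul (1 / 2)).fun_mul hWy.hasDerivAt)).congr_deriv (by ring)
  have dpx : HasDerivAt (fun t => py * (y * t - x * py) + (1 / 2) * y ^ 2 * W x y) (py * y) px :=
    (((((hasDerivAt_id' px).const_mul y).sub_const (x * py)).const_mul py).add_const
      ((1 / 2) * y ^ 2 * W x y)).congr_deriv (by ring)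
  have dpy : HasDerivAt (fun t => t * (y * px - x * t) + (1 / 2) * y ^ 2 * W x y)
      (y * px - 2 * x * py) py :=
    (((hasDerivAt_id' py).fun_mul (((hasDerivAt_id' py).const_mul x).const_sub (y * px))).add_const
      ((1 / 2) * y ^ 2 * W x y)).congr_deriv (by ring)
  unfold poisson
  rw [dx.deriv, dy.deriv, dpx.deriv, dpy.deriv]
  ring

theorem Nat.choose_succ_sub_succ_eq (n m : ℕ) :
    (n + 1 - m).choose (m + 1) = (n - m).choose m + (n - m).choose (m + 1) := by
  rcases le_or_gt m n with h | h
  · rw [show n + 1 - m = n - m + 1 by omega, Nat.choose_succ_succ]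
  · rw [show n - m = 0 by omega, show n + 1 - m = 0 by omega,
      Nat.choose_eq_zero_of_lt (by omega : 0 < m + 1), Nat.choose_eq_zero_of_lt (by omega : 0 < m)]

noncomputable def Vpar.term (j m : ℕ) (x y : ℝ) : ℝ :=
  ((2 : ℝ) ^ (2 * m))⁻¹ * (Nat.choose (j - m) m : ℝ) * x ^ (j - 2 * m) * y ^ (2 * m)

namespace Vpar

variable (x y : ℝ)

theorem term_eq_zero {j m : ℕ} (h : j / 2 < m) : term j m x y = 0 := by
  simp [term, Nat.choose_eq_zero_of_lt (show j - m < m by omega)]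

theorem term_zero (j : ℕ) : term j 0 x y = x ^ j := by
  simp [term]

theorem term_add_two_succ (n m : ℕ) :
    term (n + 2) (m + 1) x y = x * term (n + 1) (m + 1) x y + y ^ 2 / 4 * term n m x y := by
  -- when `n < 2 * m + 1` the exponent is a truncated subtraction, but the binomial vanishes
  have hx : ((n - m).choose (m + 1) : ℝ) * (x * x ^ (n + 1 - 2 * (m + 1)))
      = (n - m).choose (m + 1) * x ^ (n - 2 * m) := by
    rcases le_or_gt (2 * m + 1) n with h | h
    · rw [← pow_succ', show n + 1 - 2 * (m + 1) + 1 = n - 2 * m by omega]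
    · rw [Nat.choose_eq_zero_of_lt (by omega)]; simp
  have h4 : ((2 : ℝ) ^ (2 * (m + 1)))⁻¹ = ((2 : ℝ) ^ (2 * m))⁻¹ / 4 := by
    rw [mul_add, pow_add, mul_inv, div_eq_mul_inv]; norm_num
  simp only [term, show n + 2 - (m + 1) = n + 1 - m by omega,
    show n + 1 - (m + 1) = n - m by omega, show n + 2 - 2 * (m + 1) = n - 2 * m by omega,
    Nat.choose_succ_sub_succ_eq, Nat.cast_add, h4]
  linear_combination -(y ^ (2 * (m + 1)) * ((2 : ℝ) ^ (2 * m))⁻¹ / 4) * hx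

end Vpar

theorem Vpar_eq_sum_term {j N : ℕ} (h : j / 2 < N) (x y : ℝ) :
    Vpar j x y = ∑ m ∈ range N, Vpar.term j m x y :=
  sum_subset (range_subset_range.2 h) fun _ _ hm =>
    Vpar.term_eq_zero x y (by simp at hm; omega)

theorem Vpar_add_two (n : ℕ) (x y : ℝ) :
    Vpar (n + 2) x y = x * Vpar (n + 1) x y + y ^ 2 / 4 * Vpar n x y := by
  rw [Vpar_eq_sum_term (N := n + 2) (by omega), Vpar_eq_sum_term (N := n + 2) (by omega),
    Vpar_eq_sum_term (N := n + 1) (by omega), sum_range_succ', sum_range_succ' _ (n + 1),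
    mul_add, mul_sum, mul_sum]
  simp only [Vpar.term_add_two_succ, sum_add_distrib, Vpar.term_zero, pow_succ]
  ring

theorem Vpar_zero (x y : ℝ) : Vpar 0 x y = 1 := by simp [Vpar]

theorem Vpar_one (x y : ℝ) : Vpar 1 x y = x := by simp [Vpar]

theorem differentiable_Vpar_left (j : ℕ) (y : ℝ) : Differentiable ℝ (fun t => Vpar j t y) := by
  unfold Vpar; fun_prop

theorem differentiable_Vpar_right (j : ℕ) (x : ℝ) : Differentiable ℝ (fun t => Vpar j x t) := by
  unfold Vpar; fun_prop

theorem deriv_Vpar_add_two_left (n : ℕ) (x y : ℝ) :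
    deriv (fun t => Vpar (n + 2) t y) x = Vpar (n + 1) x y + x * deriv (fun t => Vpar (n + 1) t y) x
      + y ^ 2 / 4 * deriv (fun t => Vpar n t y) x := by
  have h := ((hasDerivAt_id' x).fun_mul (differentiable_Vpar_left (n + 1) y x).hasDerivAt).fun_add
    ((differentiable_Vpar_left n y x).hasDerivAt.const_mul (y ^ 2 / 4))
  simp_rw [Vpar_add_two]
  rw [h.deriv]
  ring

theorem deriv_Vpar_add_two_right (n : ℕ) (x y : ℝ) :
    deriv (fun t => Vpar (n + 2) x t) y = x * deriv (fun t => Vpar (n + 1) x t) y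
      + y / 2 * Vpar n x y + y ^ 2 / 4 * deriv (fun t => Vpar n x t) y := by
  have h := ((differentiable_Vpar_right (n + 1) x y).hasDerivAt.const_mul x).fun_add
    (((hasDerivAt_pow 2 y).div_const 4).fun_mul (differentiable_Vpar_right n x y).hasDerivAt)
  simp_rw [Vpar_add_two]
  rw [h.deriv]
  ring

theorem deriv_Vpar_succ_right (n : ℕ) (x y : ℝ) :
    deriv (fun t => Vpar (n + 1) x t) y = y / 2 * deriv (fun t => Vpar n t y) x := by
  induction n using Nat.twoStepInduction with
  | zero => simp [Vpar_one, Vpar_zero]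
  | one => simp [deriv_Vpar_add_two_right, Vpar_one, Vpar_zero]
  | more n ih₁ ih₂ =>
    rw [deriv_Vpar_add_two_right, ih₂, ih₁, deriv_Vpar_add_two_left]
    ring

theorem deriv_Vpar_succ_left (n : ℕ) (x y : ℝ) :
    deriv (fun t => Vpar (n + 1) t y) x = Vpar n x y + x * deriv (fun t => Vpar n t y) x
      + y / 2 * deriv (fun t => Vpar n x t) y := by
  cases n with
  | zero => simp [Vpar_one, Vpar_zero]
  | succ n =>
    rw [deriv_Vpar_add_two_left, deriv_Vpar_succ_right]
    ring

theorem stmt4 (k : ℕ) (hk : 1 ≤ k) :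
    ∀ x y px py : ℝ,
      poisson (Vpar k)
        (fun x y px py =>
          py * (y * px - x * py) + (1 / 2) * y ^ 2 * Vpar (k - 1) x y) x y px py = 0 := by
  intro x y px py
  obtain ⟨n, rfl⟩ : ∃ n, k = n + 1 := ⟨k - 1, by omega⟩
  rw [Nat.add_sub_cancel, poisson_parabolic_ansatz _ _ _ _ _ _ (differentiable_Vpar_left n y x)
    (differentiable_Vpar_right n x y), deriv_Vpar_succ_left, deriv_Vpar_succ_right]
  ring
end

section
/- For every natural number k ≥ 1 and all real x, y with r = √(x²+y²) > 0, the expression (1/r)·[((r+x)/2)^{k+1} + (−1)^k·((r−x)/2)^{k+1}] equals the polynomial Σ_{m=0}^{⌊k/2⌋} 2^{−2m}·C(k−m, m)·x^{k−2m}·y^{2m}. -/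
/-!
With `a = (r + x) / 2` and `b = -(r - x) / 2` one has `a - b = r`, `a + b = x` and
`a * b = -y² / 4`, so the left-hand side is `(a^(k+1) - b^(k+1)) / (a - b)`, the Lucas sequence
`U_{k+1}(x, -y²/4)`. The right-hand side is the classical expansion of `U_{k+1}(P, Q)` as a sum of
binomial coefficients along a shallow diagonal of Pascal's triangle, which follows from Pascal's
rule and the recurrence `U_{n+2} = P U_{n+1} - Q U_n`.
-/

open Finset

theorem choose_succ_mul_pow_sub {R : Type*} [CommSemiring R] (s : R) (i j : ℕ) :
    (i.choose (j + 1) : R) * s ^ (i - j) = s * ((i.choose (j + 1) : R) * s ^ (i - (j + 1))) := by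
  rcases lt_or_ge i (j + 1) with h | h
  · simp [Nat.choose_eq_zero_of_lt h]
  · rw [show i - j = i - (j + 1) + 1 by omega, pow_succ]
    ring

section LucasSequence

variable {R : Type*} [CommRing R]

def lucasU (P Q : R) : ℕ → R
  | 0 => 0
  | 1 => 1
  | n + 2 => P * lucasU P Q (n + 1) - Q * lucasU P Q n

theorem sub_mul_lucasU (a b : R) (n : ℕ) :
    (a - b) * lucasU (a + b) (a * b) n = a ^ n - b ^ n := by
  induction n using Nat.twoStepInduction with
  | zero => simp [lucasU]
  | one => simp [lucasU]
  | more n ih₀ ih₁ =>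
    calc (a - b) * lucasU (a + b) (a * b) (n + 2)
        = (a + b) * ((a - b) * lucasU (a + b) (a * b) (n + 1))
          - a * b * ((a - b) * lucasU (a + b) (a * b) n) := by rw [lucasU]; ring
      _ = a ^ (n + 2) - b ^ (n + 2) := by rw [ih₀, ih₁]; ring

theorem lucasU_succ_eq_sum_antidiagonal (P Q : R) (n : ℕ) :
    lucasU P Q (n + 1) =
      ∑ p ∈ antidiagonal n, (p.1.choose p.2 : R) * P ^ (p.1 - p.2) * (-Q) ^ p.2 := by
  set f : ℕ × ℕ → R := fun p => (p.1.choose p.2 : R) * P ^ (p.1 - p.2) * (-Q) ^ p.2 with hf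
  have f_zero_left (m : ℕ) : f (0, m + 1) = 0 := by simp [hf]
  have f_zero_right (m : ℕ) : f (m, 0) = P ^ m := by simp [hf]
  have pascal (p : ℕ × ℕ) : f (p.1 + 1, p.2 + 1) = P * f (p.1, p.2 + 1) - Q * f p := by
    simp only [hf, Nat.choose_succ_succ', Nat.cast_add, Nat.add_sub_add_right]
    rw [add_mul, add_mul, choose_succ_mul_pow_sub]
    ring
  clear_value f
  induction n using Nat.twoStepInduction with
  | zero => simp [lucasU, f_zero_right]
  | one => simp [lucasU, Nat.sum_antidiagonal_succ, f_zero_left, f_zero_right]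
  | more n ih₀ ih₁ =>
    rw [lucasU, ih₀, ih₁, Nat.sum_antidiagonal_succ (n := n + 1), Nat.sum_antidiagonal_succ',
      Nat.sum_antidiagonal_succ']
    simp only [pascal, sum_sub_distrib, ← mul_sum, f_zero_left, f_zero_right]
    ring

theorem lucasU_succ_eq_sum_range (P Q : R) (n : ℕ) :
    lucasU P Q (n + 1) =
      ∑ m ∈ range (n / 2 + 1), ((n - m).choose m : R) * P ^ (n - 2 * m) * (-Q) ^ m := by
  rw [lucasU_succ_eq_sum_antidiagonal, ← Nat.sum_antidiagonal_swap,
    Nat.sum_antidiagonal_eq_sum_range_succ_mk]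
  have hsub : range (n / 2 + 1) ⊆ range (n + 1) := range_subset_range.mpr (by omega)
  rw [← sum_subset hsub fun m hm hm' => ?vanish]
  case vanish =>
    simp only [mem_range] at hm hm'
    simp [Nat.choose_eq_zero_of_lt (show n - m < m by omega)]
  refine sum_congr rfl fun m _ => ?_
  rw [Prod.swap_prod_mk, show n - m - m = n - 2 * m by omega]

end LucasSequence

theorem stmt6_general (k : ℕ) (x y r : ℝ)
    (hr : r = Real.sqrt (x ^ 2 + y ^ 2)) (hr0 : 0 < r) :
    (1 / r) * (((r + x) / 2) ^ (k + 1) + (-1 : ℝ) ^ k * ((r - x) / 2) ^ (k + 1)) =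
      ∑ m ∈ Finset.range (k / 2 + 1),
        ((2 : ℝ) ^ (2 * m))⁻¹ * (Nat.choose (k - m) m : ℝ)
          * x ^ (k - 2 * m) * y ^ (2 * m) := by
  have hr2 : r ^ 2 = x ^ 2 + y ^ 2 := by rw [hr, Real.sq_sqrt (by positivity)]
  have hsub : (r + x) / 2 - -((r - x) / 2) = r := by ring
  have hadd : (r + x) / 2 + -((r - x) / 2) = x := by ring
  have hmul : (r + x) / 2 * -((r - x) / 2) = -(y ^ 2 / 4) := by
    linear_combination (-1 / 4 : ℝ) * hr2
  calc _ = (1 / r) * (((r + x) / 2) ^ (k + 1) - (-((r - x) / 2)) ^ (k + 1)) := by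
        rw [neg_pow _ (k + 1)]; ring
    _ = lucasU x (-(y ^ 2 / 4)) (k + 1) := by
      rw [← sub_mul_lucasU, hsub, hadd, hmul, one_div, inv_mul_cancel_left₀ hr0.ne']
    _ = _ := by
      rw [lucasU_succ_eq_sum_range]
      refine sum_congr rfl fun m _ => ?_
      rw [neg_neg, div_pow, ← pow_mul, show (4 : ℝ) = 2 ^ 2 by norm_num, ← pow_mul]
      ring

theorem stmt6 (k : ℕ) (hk : 1 ≤ k) (x y r : ℝ)
    (hr : r = Real.sqrt (x ^ 2 + y ^ 2)) (hr0 : 0 < r) :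
    (1 / r) * (((r + x) / 2) ^ (k + 1) + (-1 : ℝ) ^ k * ((r - x) / 2) ^ (k + 1)) =
      ∑ m ∈ Finset.range (k / 2 + 1),
        ((2 : ℝ) ^ (2 * m))⁻¹ * (Nat.choose (k - m) m : ℝ)
          * x ^ (k - 2 * m) * y ^ (2 * m) :=
  stmt6_general k x y r hr hr0
end

section
/- Every polynomial solution (A₀, A₁, A₂, A₃) in ℝ[x,y] of the system ∂A₀/∂x = 0, ∂A₀/∂y + ∂A₁/∂x = 0, ∂A₁/∂y + ∂A₂/∂x = 0, ∂A₂/∂y + ∂A₃/∂x = 0, ∂A₃/∂y = 0, with each Aᵢ homogeneous of the same degree d ≤ 3, is a linear combination of the following: for d = 3, (y³, −3x y², 3x²y, −x³) (i.e., coefficients of (y·px − x·py)³); for d = 2, the coefficient vectors of px·(y px − x py)² and py·(y px − x py)²; for d = 1, the coefficient vectors of px²(y px − x py), px py(y px − x py), py²(y px − x py); for d = 0, arbitrary constants (a₀, b₀, c₀, d₀). -/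
/-!
The outer equations say that `A₀` is killed by `∂ₓ` and `A₃` by `∂ᵧ`; in two variables a
homogeneous polynomial of degree `d` with this property is a multiple of `y^d`, resp. `x^d`.
The next equations then prescribe `∂ₓA₁` and `∂ᵧA₂`, which determines `A₁` and `A₂` up to further
multiples of `y^d` and `x^d`. What remains of the middle equation `∂ᵧA₁ + ∂ₓA₂ = 0` is a
polynomial identity in the four remaining constants; evaluating it at a few points solves it.
-/

open MvPolynomial

/-- ∂/∂x on polynomials in two variables. -/
noncomputable def dX (p : MvPolynomial (Fin 2) ℝ) : MvPolynomial (Fin 2) ℝ :=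
  MvPolynomial.pderiv (0 : Fin 2) p

/-- ∂/∂y on polynomials in two variables. -/
noncomputable def dY (p : MvPolynomial (Fin 2) ℝ) : MvPolynomial (Fin 2) ℝ :=
  MvPolynomial.pderiv (1 : Fin 2) p

namespace MvPolynomial

theorem IsHomogeneous.eq_C_coeff_zero {R σ : Type*} [CommSemiring R] {p : MvPolynomial σ R}
    (hp : p.IsHomogeneous 0) : p = C (coeff 0 p) :=
  totalDegree_eq_zero_iff_eq_C.mp ((totalDegree_zero_iff_isHomogeneous σ).mpr hp)

variable {R : Type*} [CommRing R] [IsDomain R] [CharZero R]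

theorem coeff_eq_zero_of_pderiv_eq_zero {σ : Type*} {i : σ} {p : MvPolynomial σ R}
    (h : pderiv i p = 0) {m : σ →₀ ℕ} (hm : m i ≠ 0) : coeff m p = 0 := by
  classical
  have hle : Finsupp.single i 1 ≤ m := Finsupp.single_le_iff.mpr (Nat.one_le_iff_ne_zero.mpr hm)
  have := coeff_pderiv (i := i) p (m - Finsupp.single i 1)
  rw [h, coeff_zero, tsub_add_cancel_of_le hle, eq_comm, mul_eq_zero] at this
  exact this.resolve_right (by norm_cast)

theorem IsHomogeneous.eq_C_mul_X_pow_of_pderiv_eq_zero {i j : Fin 2} (hij : i ≠ j)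
    {p : MvPolynomial (Fin 2) R} {d : ℕ} (hp : p.IsHomogeneous d) (h : pderiv i p = 0) :
    p = C (coeff (Finsupp.single j d) p) * X j ^ d := by
  classical
  rw [C_mul_X_pow_eq_monomial]
  ext m
  rw [coeff_monomial]
  split_ifs with hm
  · rw [hm]
  by_contra hne
  have hmi : m i = 0 := by
    by_contra hmi
    exact hne (coeff_eq_zero_of_pderiv_eq_zero h hmi)
  have hdeg : m.degree = d := by
    by_contra hd
    exact hne (hp.coeff_eq_zero hd)
  rw [Finsupp.degree_eq_sum, Fin.sum_univ_two] at hdeg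
  refine hm (Finsupp.ext fun k => ?_)
  fin_cases i <;> fin_cases j <;> fin_cases k <;> simp_all

theorem IsHomogeneous.exists_eq_add_C_mul_X_pow_of_pderiv_eq {i j : Fin 2} (hij : i ≠ j)
    {p q : MvPolynomial (Fin 2) R} {d : ℕ} (hp : p.IsHomogeneous d) (hq : q.IsHomogeneous d)
    (h : pderiv i p = pderiv i q) : ∃ c, p = q + C c * X j ^ d :=
  ⟨_, eq_add_of_sub_eq' ((hp.sub hq).eq_C_mul_X_pow_of_pderiv_eq_zero hij
    (by rw [map_sub, h, sub_self]))⟩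

end MvPolynomial

/-- The cubic form `A₀ px³ + A₁ px² py + A₂ px py² + A₃ py³` is a first integral of free motion. -/
def IsCubicIntegral (A0 A1 A2 A3 : MvPolynomial (Fin 2) ℝ) : Prop :=
  dX A0 = 0 ∧ dY A0 + dX A1 = 0 ∧ dY A1 + dX A2 = 0 ∧ dY A2 + dX A3 = 0 ∧ dY A3 = 0

namespace IsCubicIntegral

variable {A0 A1 A2 A3 : MvPolynomial (Fin 2) ℝ}

theorem exists_eq_of_isHomogeneous_succ (hA : IsCubicIntegral A0 A1 A2 A3) {d : ℕ}
    (h0 : A0.IsHomogeneous (d + 1)) (h1 : A1.IsHomogeneous (d + 1))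
    (h2 : A2.IsHomogeneous (d + 1)) (h3 : A3.IsHomogeneous (d + 1)) :
    ∃ a b c e : ℝ, A0 = C a * X 1 ^ (d + 1)
      ∧ A1 = C (-(d + 1) * a) * X 0 * X 1 ^ d + C b * X 1 ^ (d + 1)
      ∧ A2 = C (-(d + 1) * e) * X 0 ^ d * X 1 + C c * X 0 ^ (d + 1)
      ∧ A3 = C e * X 0 ^ (d + 1) := by
  obtain ⟨e1, e2, -, e4, e5⟩ := hA
  have hA0 := h0.eq_C_mul_X_pow_of_pderiv_eq_zero (j := 1) (by decide) e1
  have hA3 := h3.eq_C_mul_X_pow_of_pderiv_eq_zero (j := 0) (by decide) e5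
  set a := coeff (Finsupp.single 1 (d + 1)) A0
  set e := coeff (Finsupp.single 0 (d + 1)) A3
  obtain ⟨b, hA1⟩ := h1.exists_eq_add_C_mul_X_pow_of_pderiv_eq (i := 0) (j := 1) (by decide)
    (q := C (-(d + 1) * a) * X 0 * X 1 ^ d)
    (add_comm 1 d ▸ (isHomogeneous_C_mul_X _ 0).mul (isHomogeneous_X_pow (1 : Fin 2) d)) (by
      have hdX : dX A1 = -dY A0 := eq_neg_of_add_eq_zero_right e2
      rw [dX, dY] at hdX
      rw [hdX, hA0]
      simp
      ring)
  obtain ⟨c, hA2⟩ := h2.exists_eq_add_C_mul_X_pow_of_pderiv_eq (i := 1) (j := 0) (by decide)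
    (q := C (-(d + 1) * e) * X 0 ^ d * X 1)
    (((isHomogeneous_X_pow (0 : Fin 2) d).C_mul _).mul (isHomogeneous_X _ 1)) (by
      have hdY : dY A2 = -dX A3 := eq_neg_of_add_eq_zero_left e4
      rw [dX, dY] at hdY
      rw [hdY, hA3]
      simp
      ring)
  exact ⟨a, b, c, e, hA0, hA1, hA2, hA3⟩

theorem exists_eq_of_isHomogeneous_three (hA : IsCubicIntegral A0 A1 A2 A3)
    (h0 : A0.IsHomogeneous 3) (h1 : A1.IsHomogeneous 3)
    (h2 : A2.IsHomogeneous 3) (h3 : A3.IsHomogeneous 3) :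
    ∃ a : ℝ, A0 = C a * X 1 ^ 3 ∧ A1 = C (-3 * a) * (X 0 * X 1 ^ 2)
      ∧ A2 = C (3 * a) * (X 0 ^ 2 * X 1) ∧ A3 = C (-a) * X 0 ^ 3 := by
  have e3 := hA.2.2.1
  obtain ⟨a, b, c, e, rfl, rfl, rfl, rfl⟩ := hA.exists_eq_of_isHomogeneous_succ (d := 2) h0 h1 h2 h3
  have at10 := congrArg (eval ![1, 0]) e3
  have at01 := congrArg (eval ![0, 1]) e3
  have at11 := congrArg (eval ![1, 1]) e3
  simp [dX, dY] at at10 at01 at11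
  obtain rfl : b = 0 := by linarith
  obtain rfl : c = 0 := by linarith
  obtain rfl : e = -a := by linarith
  refine ⟨a, ?_, ?_, ?_, ?_⟩ <;> simp [map_ofNat C] <;> ring

theorem exists_eq_of_isHomogeneous_two (hA : IsCubicIntegral A0 A1 A2 A3)
    (h0 : A0.IsHomogeneous 2) (h1 : A1.IsHomogeneous 2)
    (h2 : A2.IsHomogeneous 2) (h3 : A3.IsHomogeneous 2) :
    ∃ a b : ℝ, A0 = C a * X 1 ^ 2
      ∧ A1 = C (-2 * a) * (X 0 * X 1) + C b * X 1 ^ 2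
      ∧ A2 = C a * X 0 ^ 2 + C (-2 * b) * (X 0 * X 1)
      ∧ A3 = C b * X 0 ^ 2 := by
  have e3 := hA.2.2.1
  obtain ⟨a, b, c, e, rfl, rfl, rfl, rfl⟩ := hA.exists_eq_of_isHomogeneous_succ (d := 1) h0 h1 h2 h3
  have at10 := congrArg (eval ![1, 0]) e3
  have at01 := congrArg (eval ![0, 1]) e3
  simp [dX, dY] at at10 at01
  obtain rfl : a = c := by linarith
  obtain rfl : b = e := by linarith
  refine ⟨a, b, ?_, ?_, ?_, ?_⟩ <;> simp [map_ofNat C] <;> ring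

theorem exists_eq_of_isHomogeneous_one (hA : IsCubicIntegral A0 A1 A2 A3)
    (h0 : A0.IsHomogeneous 1) (h1 : A1.IsHomogeneous 1)
    (h2 : A2.IsHomogeneous 1) (h3 : A3.IsHomogeneous 1) :
    ∃ a b c : ℝ, A0 = C a * X 1
      ∧ A1 = C (-a) * X 0 + C b * X 1
      ∧ A2 = C (-b) * X 0 + C c * X 1
      ∧ A3 = C (-c) * X 0 := by
  have e3 := hA.2.2.1
  obtain ⟨a, b, c, e, rfl, rfl, rfl, rfl⟩ := hA.exists_eq_of_isHomogeneous_succ (d := 0) h0 h1 h2 h3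
  have at00 := congrArg (eval ![0, 0]) e3
  simp [dX, dY] at at00
  obtain rfl : c = -b := by linarith
  refine ⟨a, b, -e, ?_, ?_, ?_, ?_⟩ <;> simp [add_comm]

end IsCubicIntegral

theorem stmt11 (d : ℕ) (hd : d ≤ 3) (A0 A1 A2 A3 : MvPolynomial (Fin 2) ℝ)
    (h0 : A0.IsHomogeneous d) (h1 : A1.IsHomogeneous d)
    (h2 : A2.IsHomogeneous d) (h3 : A3.IsHomogeneous d)
    (e1 : dX A0 = 0) (e2 : dY A0 + dX A1 = 0) (e3 : dY A1 + dX A2 = 0)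
    (e4 : dY A2 + dX A3 = 0) (e5 : dY A3 = 0) :
    (d = 3 → ∃ a : ℝ,
        A0 = C a * X 1 ^ 3 ∧ A1 = C (-3 * a) * (X 0 * X 1 ^ 2)
        ∧ A2 = C (3 * a) * (X 0 ^ 2 * X 1) ∧ A3 = C (-a) * X 0 ^ 3)
    ∧ (d = 2 → ∃ a b : ℝ,
        A0 = C a * X 1 ^ 2
        ∧ A1 = C (-2 * a) * (X 0 * X 1) + C b * X 1 ^ 2
        ∧ A2 = C a * X 0 ^ 2 + C (-2 * b) * (X 0 * X 1)
        ∧ A3 = C b * X 0 ^ 2)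
    ∧ (d = 1 → ∃ a b c : ℝ,
        A0 = C a * X 1
        ∧ A1 = C (-a) * X 0 + C b * X 1
        ∧ A2 = C (-b) * X 0 + C c * X 1
        ∧ A3 = C (-c) * X 0)
    ∧ (d = 0 → ∃ a b c e : ℝ,
        A0 = C a ∧ A1 = C b ∧ A2 = C c ∧ A3 = C e) := by
  have hA : IsCubicIntegral A0 A1 A2 A3 := ⟨e1, e2, e3, e4, e5⟩
  interval_cases d
  · exact ⟨by simp, by simp, by simp, fun _ =>
      ⟨_, _, _, _, h0.eq_C_coeff_zero, h1.eq_C_coeff_zero, h2.eq_C_coeff_zero,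
        h3.eq_C_coeff_zero⟩⟩
  · exact ⟨by simp, by simp, fun _ => hA.exists_eq_of_isHomogeneous_one h0 h1 h2 h3, by simp⟩
  · exact ⟨by simp, fun _ => hA.exists_eq_of_isHomogeneous_two h0 h1 h2 h3, by simp, by simp⟩
  · exact ⟨fun _ => hA.exists_eq_of_isHomogeneous_three h0 h1 h2 h3, by simp, by simp, by simp⟩
end

section
/- Suppose polynomials B₀, B₁ in ℝ[x,y] satisfy ∂B₀/∂x = 3A₀Vₓ + A₁V_y, ∂B₀/∂y + ∂B₁/∂x = 2A₁Vₓ + 2A₂V_y, ∂B₁/∂y = A₂Vₓ + 3A₃V_y for polynomials A₀, A₁, A₂, A₃, V. Then V satisfies the third-order linear PDE: A₂V_{xxx} + (3A₃ − 2A₁)V_{xxy} + (3A₀ − 2A₂)V_{xyy} + A₁V_{yyy} + 2(A₂ₓ − A₁_y)(V_{xx} − V_{yy}) + 2(3A₀_y − A₁ₓ − A₂_y + 3A₃ₓ)V_{xy} + (3A₀_{yy} − 2A₁_{xy} + A₂_{xx})Vₓ + (A₁_{yy} − 2A₂_{xy} + 3A₃_{xx})V_y = 0. -/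
/-!
Apply ∂_y² to the first equation, -∂_x∂_y to the second and ∂_x² to the third and add: since
∂_x and ∂_y commute, B₀ and B₁ cancel, and expanding the right-hand sides by the Leibniz rule
gives the identity.
-/

open MvPolynomial

theorem MvPolynomial.pderiv_pderiv_comm {R σ : Type*} [CommSemiring R] (i j : σ)
    (p : MvPolynomial σ R) : pderiv i (pderiv j p) = pderiv j (pderiv i p) := by
  classical
  induction p using MvPolynomial.induction_on' with
  | monomial s a =>
    rcases eq_or_ne i j with rfl | hij
    · rfl
    · simp only [pderiv_monomial, Finsupp.tsub_apply, Finsupp.single_eq_of_ne' hij,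
        Finsupp.single_eq_of_ne' hij.symm, tsub_zero, tsub_right_comm, mul_right_comm]
  | add p q hp hq => simp only [map_add, hp, hq]

namespace Derivation

variable {R A : Type*} [CommSemiring R] [CommRing A] [Algebra R A]

theorem map_ofNat (D : Derivation R A A) (n : ℕ) [n.AtLeastTwo] : D (ofNat(n) : A) = 0 :=
  D.map_natCast n

variable {D₁ D₂ : Derivation R A A}

theorem integrability_of_comm (hD : ∀ a, D₁ (D₂ a) = D₂ (D₁ a)) {B₀ B₁ P Q S : A}
    (h₀ : D₁ B₀ = P) (h₁ : D₂ B₀ + D₁ B₁ = Q) (h₂ : D₂ B₁ = S) :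
    D₂ (D₂ P) - D₁ (D₂ Q) + D₁ (D₁ S) = 0 := by
  subst h₀ h₁ h₂
  simp only [map_add, hD]
  abel

theorem thirdOrder_identity_of_comm (hD : ∀ a, D₁ (D₂ a) = D₂ (D₁ a))
    {A₀ A₁ A₂ A₃ B₀ B₁ V : A}
    (h₀ : D₁ B₀ = 3 * A₀ * D₁ V + A₁ * D₂ V)
    (h₁ : D₂ B₀ + D₁ B₁ = 2 * A₁ * D₁ V + 2 * A₂ * D₂ V)
    (h₂ : D₂ B₁ = A₂ * D₁ V + 3 * A₃ * D₂ V) :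
    A₂ * D₁ (D₁ (D₁ V))
      + (3 * A₃ - 2 * A₁) * D₁ (D₁ (D₂ V))
      + (3 * A₀ - 2 * A₂) * D₁ (D₂ (D₂ V))
      + A₁ * D₂ (D₂ (D₂ V))
      + 2 * (D₁ A₂ - D₂ A₁) * (D₁ (D₁ V) - D₂ (D₂ V))
      + 2 * (3 * D₂ A₀ - D₁ A₁ - D₂ A₂ + 3 * D₁ A₃) * D₁ (D₂ V)
      + (3 * D₂ (D₂ A₀) - 2 * D₁ (D₂ A₁) + D₁ (D₁ A₂)) * D₁ V
      + (D₂ (D₂ A₁) - 2 * D₁ (D₂ A₂) + 3 * D₁ (D₁ A₃)) * D₂ V = 0 := by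
  have h := integrability_of_comm hD h₀ h₁ h₂
  simp only [map_add, map_zero, leibniz, map_ofNat, smul_eq_mul, hD] at h ⊢
  linear_combination h

end Derivation

theorem stmt12 (A0 A1 A2 A3 B0 B1 V : MvPolynomial (Fin 2) ℝ)
    (e1 : dX B0 = 3 * A0 * dX V + A1 * dY V)
    (e2 : dY B0 + dX B1 = 2 * A1 * dX V + 2 * A2 * dY V)
    (e3 : dY B1 = A2 * dX V + 3 * A3 * dY V) :
    A2 * dX (dX (dX V))
      + (3 * A3 - 2 * A1) * dX (dX (dY V))
      + (3 * A0 - 2 * A2) * dX (dY (dY V))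
      + A1 * dY (dY (dY V))
      + 2 * (dX A2 - dY A1) * (dX (dX V) - dY (dY V))
      + 2 * (3 * dY A0 - dX A1 - dY A2 + 3 * dX A3) * dX (dY V)
      + (3 * dY (dY A0) - 2 * dX (dY A1) + dX (dX A2)) * dX V
      + (dY (dY A1) - 2 * dX (dY A2) + 3 * dX (dX A3)) * dY V = 0 :=
  Derivation.thirdOrder_identity_of_comm (pderiv_pderiv_comm 0 1) e1 e2 e3
end

section
/- Suppose polynomials B₀, B₁, B₂, C₀ in ℝ[x,y] satisfy ∂C₀/∂x = 2B₀Vₓ + B₁V_y and ∂C₀/∂y = B₁Vₓ + 2B₂V_y for a polynomial V. Then V satisfies: B₁(V_{xx} − V_{yy}) + 2(B₂ − B₀)V_{xy} + (B₁ₓ − 2B₀_y)Vₓ + (2B₂ₓ − B₁_y)V_y = 0. -/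
open MvPolynomial

theorem MvPolynomial.pderiv_ofNat {R σ : Type*} [CommSemiring R] (i : σ) (n : ℕ) [n.AtLeastTwo] :
    pderiv i (ofNat(n) : MvPolynomial σ R) = 0 := by
  rw [← Nat.cast_ofNat]
  exact (pderiv i).map_natCast n

theorem dX_dY_comm (p : MvPolynomial (Fin 2) ℝ) : dX (dY p) = dY (dX p) :=
  pderiv_pderiv_comm _ _ p

theorem dY_eq_dX_of_dX_eq_of_dY_eq {F P Q : MvPolynomial (Fin 2) ℝ} (hP : dX F = P)
    (hQ : dY F = Q) : dY P = dX Q := by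
  rw [← hP, ← hQ, dX_dY_comm]

theorem stmt13 (B0 B1 B2 C0 V : MvPolynomial (Fin 2) ℝ)
    (e1 : dX C0 = 2 * B0 * dX V + B1 * dY V)
    (e2 : dY C0 = B1 * dX V + 2 * B2 * dY V) :
    B1 * (dX (dX V) - dY (dY V))
      + 2 * (B2 - B0) * dX (dY V)
      + (dX B1 - 2 * dY B0) * dX V
      + (2 * dX B2 - dY B1) * dY V = 0 := by
  have hC := dY_eq_dX_of_dX_eq_of_dY_eq e1 e2
  have hV := dX_dY_comm V
  simp only [dX, dY, map_add, pderiv_mul, pderiv_ofNat] at hC hV ⊢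
  linear_combination -hC - 2 * B0 * hV
end
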